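/- Assume T is an ℝ-embeddable tree such that the Banach space C₀(T) is σ-fragmentable. Then T is Q-embeddable (special). -/

import Mathlib

/-!
The indicators `e t` (`indicatorIic t`) of the initial segments `[0, t]` lie in `C₀(T)` and
are pairwise at distance `1`. If infinitely many immediate successors `x k` of `t` lie below
points `u k` of a set `W`, the blocks `e (u k) - e t` have disjoint supports, so every
functional is absolutely summable on them and `e (u k) → e t` weakly. Hence a weakly open set
cutting `{e u | u ∈ W}` down to diameter `< 1` picks out a point `t ∈ W` with only finitely many
successors towards `W`, and, `f` being strictly increasing, `f` jumps by some `η > 0` from `t`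
to every point of `W` above it.

On each piece `D` of a σ-fragmentation this yields an ordinal rank that drops from `t` to every
`u > t` in `D` with `f u < f t + η t`. Sorting the points of `D` by the size of `η t` and the
position of `f t` on a grid of that mesh, the rank strictly decreases along chains of each
class, so every point has finitely many predecessors in its class: `T` is a countable union of
antichains, and such an order embeds in `ℚ`.
-/

open Filter Topology Set

universe u v

/-- A tree in the sense of the paper: a partial order with a minimal element `⊥`,
binary greatest lower bounds, and each set of predecessors `[0,t)` well ordered
(a linearly ordered, well-founded chain). -/
class TreeOrder (T : Type u) extends SemilatticeInf T, OrderBot T where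
  chain_lt : ∀ t : T, IsChain (· ≤ ·) {x : T | x < t}
  isWF_lt : ∀ t : T, Set.IsWF {x : T | x < t}

/-- The interval topology, generated by the intervals `(s,t]` (together with the
initial intervals `[0,t]`, which make the root an interior point of `[0,t]`). -/
def intervalTopology (T : Type u) [Preorder T] : TopologicalSpace T :=
  TopologicalSpace.generateFrom
    ({S : Set T | ∃ a b : T, S = Set.Ioc a b} ∪ {S : Set T | ∃ b : T, S = Set.Iic b})

instance TreeOrder.toTopologicalSpace (T : Type u) [TreeOrder T] : TopologicalSpace T :=
  intervalTopology T

/-- The weak topology of a real normed space. -/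
def weakTop (X : Type u) [NormedAddCommGroup X] [NormedSpace ℝ X] : TopologicalSpace X :=
  ⨅ f : X →L[ℝ] ℝ, TopologicalSpace.induced f inferInstance

/-- σ-fragmentability in the sense of Jayne–Namioka–Rogers: for every `ε > 0` the
space is a countable union of sets, each of which is fragmented down to `ε` by the
norm with respect to the weak topology. -/
def SigmaFragmentable (X : Type u) [NormedAddCommGroup X] [NormedSpace ℝ X] : Prop :=
  ∀ ε : ℝ, 0 < ε → ∃ A : ℕ → Set X, (⋃ n : ℕ, A n) = Set.univ ∧
    ∀ (n : ℕ) (S : Set X), S ⊆ A n → S.Nonempty →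
      ∃ V : Set X, IsOpen[weakTop X] V ∧ (S ∩ V).Nonempty ∧ Metric.diam (S ∩ V) ≤ ε

namespace ZeroAtInftyContinuousMap

variable {α : Type*} [TopologicalSpace α]

lemma coe_sum {β ι : Type*} [TopologicalSpace β] [AddCommMonoid β] [ContinuousAdd β]
    (K : Finset ι) (g : ι → ZeroAtInftyContinuousMap α β) :
    ⇑(∑ k ∈ K, g k) = ∑ k ∈ K, ⇑(g k) :=
  map_sum (⟨⟨DFunLike.coe, coe_zero⟩, coe_add⟩ : ZeroAtInftyContinuousMap α β →+ α → β) g K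

lemma norm_le {g : ZeroAtInftyContinuousMap α ℝ} {C : ℝ} (hC : 0 ≤ C) :
    ‖g‖ ≤ C ↔ ∀ x, ‖g x‖ ≤ C := by
  rw [← norm_toBCF_eq_norm]
  exact BoundedContinuousFunction.norm_le hC

lemma dist_apply_le (g h : ZeroAtInftyContinuousMap α ℝ) (x : α) :
    dist (g x : ℝ) (h x) ≤ dist g h := by
  rw [← dist_toBCF_eq_dist (f := g)]
  exact BoundedContinuousFunction.dist_coe_le_dist (f := g.toBCF) (g := h.toBCF) x

end ZeroAtInftyContinuousMap

lemma abs_sum_mul_indicator_le_one {α ι : Type*} {K : Finset ι} {S : ι → Set α}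
    (hS : (K : Set ι).PairwiseDisjoint S) {c : ι → ℝ} (hc : ∀ k, |c k| ≤ 1) (x : α) :
    |∑ k ∈ K, c k * (S k).indicator 1 x| ≤ 1 :=
  calc |∑ k ∈ K, c k * (S k).indicator 1 x|
      ≤ ∑ k ∈ K, (S k).indicator 1 x := by
        refine (Finset.abs_sum_le_sum_abs _ _).trans (Finset.sum_le_sum fun k _ => ?_)
        have h0 : 0 ≤ (S k).indicator (1 : α → ℝ) x :=
          indicator_nonneg (fun _ _ => zero_le_one) x
        rw [abs_mul, abs_of_nonneg h0]
        exact mul_le_of_le_one_left h0 (hc k)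
    _ = (⋃ k ∈ K, S k).indicator 1 x := by rw [Finset.indicator_biUnion_apply K S hS]
    _ ≤ 1 := indicator_le_self' (fun _ _ => zero_le_one) x

lemma ContinuousLinearMap.sum_abs_le_opNorm {E ι : Type*} [SeminormedAddCommGroup E]
    [NormedSpace ℝ E] (φ : E →L[ℝ] ℝ) (K : Finset ι) (v : ι → E)
    (hv : ∀ c : ι → ℝ, (∀ k, |c k| ≤ 1) → ‖∑ k ∈ K, c k • v k‖ ≤ 1) :
    ∑ k ∈ K, |φ (v k)| ≤ ‖φ‖ := by
  have hsign : ∀ k, |(SignType.sign (φ (v k)) : ℝ)| ≤ 1 := fun k => by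
    rcases SignType.sign (φ (v k)) with _ | _ | _ <;> simp
  calc ∑ k ∈ K, |φ (v k)| = φ (∑ k ∈ K, (SignType.sign (φ (v k)) : ℝ) • v k) := by
        simp [map_sum, sign_mul_self]
    _ ≤ ‖φ‖ * ‖∑ k ∈ K, (SignType.sign (φ (v k)) : ℝ) • v k‖ :=
        (le_abs_self _).trans (φ.le_opNorm _)
    _ ≤ ‖φ‖ := mul_le_of_le_one_right (norm_nonneg _) (hv _ hsign)

lemma tendsto_nhds_weakTop_iff {X ι : Type*} [NormedAddCommGroup X] [NormedSpace ℝ X]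
    {l : Filter ι} {g : ι → X} {x : X} :
    Tendsto g l (@nhds X (weakTop X) x) ↔
      ∀ φ : X →L[ℝ] ℝ, Tendsto (fun i => φ (g i)) l (𝓝 (φ x)) := by
  unfold weakTop
  simp only [nhds_iInf, tendsto_iInf, nhds_induced, tendsto_comap_iff]
  rfl

lemma IsChain.finite_of_strictAntiOn {α β : Type*} [PartialOrder α] [WellFoundedLT α]
    [Preorder β] [WellFoundedLT β] {s : Set α} (hs : IsChain (· ≤ ·) s) {ρ : α → β}
    (hρ : StrictAntiOn ρ s) : s.Finite := by
  classical
  let _ := hs.linearOrder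
  have : WellFoundedGT s :=
    StrictAnti.wellFoundedGT (f := fun a : s => ρ a) fun a b h => hρ a.2 b.2 h
  have := Finite.of_wellFoundedLT_wellFoundedGT s
  exact s.toFinite

section SigmaAntichain

variable {α : Type*} [PartialOrder α]

def IsSigmaAntichain (s : Set α) : Prop :=
  ∃ 𝒜 : Set (Set α), 𝒜.Countable ∧ (∀ a ∈ 𝒜, IsAntichain (· ≤ ·) a) ∧ s ⊆ ⋃₀ 𝒜

lemma IsSigmaAntichain.mono {s t : Set α} (ht : IsSigmaAntichain t) (hst : s ⊆ t) :
    IsSigmaAntichain s :=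
  let ⟨𝒜, h𝒜, hanti, hcov⟩ := ht
  ⟨𝒜, h𝒜, hanti, hst.trans hcov⟩

lemma IsSigmaAntichain.iUnion {ι : Type*} [Countable ι] {s : ι → Set α}
    (h : ∀ i, IsSigmaAntichain (s i)) : IsSigmaAntichain (⋃ i, s i) := by
  choose 𝒜 h𝒜 hanti hcov using h
  refine ⟨⋃ i, 𝒜 i, countable_iUnion h𝒜, fun a ha => ?_, iUnion_subset fun i => ?_⟩
  · obtain ⟨i, hi⟩ := mem_iUnion.1 ha
    exact hanti i a hi
  · exact (hcov i).trans (sUnion_mono (subset_iUnion 𝒜 i))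

lemma isSigmaAntichain_of_forall_finite_lt {s : Set α}
    (hs : ∀ t ∈ s, {x ∈ s | x < t}.Finite) : IsSigmaAntichain s := by
  refine ⟨range fun n : ℕ => {t ∈ s | {x ∈ s | x < t}.ncard = n}, countable_range _, ?_, ?_⟩
  · rintro _ ⟨n, rfl⟩ a ⟨has, ha⟩ b ⟨hbs, hb⟩ hab hle
    have hlt : {x ∈ s | x < a}.ncard < {x ∈ s | x < b}.ncard :=
      ncard_lt_ncard ⟨fun x hx => ⟨hx.1, hx.2.trans_le hle⟩,
        fun hsub => (hsub ⟨has, lt_of_le_of_ne hle hab⟩).2.false⟩ (hs b hbs)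
    omega
  · exact fun t ht => mem_sUnion.2 ⟨_, ⟨_, rfl⟩, ht, rfl⟩

end SigmaAntichain

lemma Pi.toLex_lt_of_le_of_lt {ι : Type*} [LinearOrder ι] [WellFoundedLT ι] {β : ι → Type*}
    [∀ i, PartialOrder (β i)] {x y : ∀ i, β i} {i : ι} (hle : ∀ j < i, x j ≤ y j)
    (hlt : x i < y i) : toLex x < toLex y := by
  classical
  let z : ∀ j, β j := fun j => if j < i then x j else y j
  have hxz : toLex x < toLex z := ⟨i, fun j hj => by simp [z, hj], by simpa [z] using hlt⟩
  refine hxz.trans_le (Pi.toLex_monotone fun j => ?_)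
  by_cases hj : j < i
  · simpa [z, hj] using hle j hj
  · simp [z, hj]

lemma exists_strictMono_rat_of_countable_range {α β : Type*} [Preorder α] [LinearOrder β]
    {g : α → β} (hg : StrictMono g) (hc : (range g).Countable) : ∃ q : α → ℚ, StrictMono q := by
  have := hc.to_subtype
  obtain ⟨e⟩ := Order.embedding_from_countable_to_dense (range g) ℚ
  exact ⟨fun a => e ⟨g a, a, rfl⟩, fun a b hab => e.strictMono (show g a < g b from hg hab)⟩

lemma exists_strictMono_rat_of_isSigmaAntichain {α : Type*} [PartialOrder α]
    (h : IsSigmaAntichain (univ : Set α)) : ∃ q : α → ℚ, StrictMono q := by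
  classical
  obtain ⟨𝒜, h𝒜, hanti, hcov⟩ := h
  -- `∅` is inserted only to make the family nonempty, so that it can be enumerated by `ℕ`.
  obtain ⟨A, hA⟩ := (h𝒜.insert ∅).exists_eq_range (insert_nonempty _ _)
  have hAanti (n : ℕ) : IsAntichain (· ≤ ·) (A n) := by
    rcases (show A n ∈ insert ∅ 𝒜 from hA ▸ mem_range_self n) with h | h
    · exact h ▸ IsAntichain.empty
    · exact hanti _ h
  have hAcov (t : α) : ∃ n, t ∈ A n := by
    obtain ⟨a, ha, hta⟩ := mem_sUnion.1 (hcov (mem_univ t))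
    obtain ⟨n, rfl⟩ := (show a ∈ range A from hA ▸ mem_insert_of_mem _ ha)
    exact ⟨n, hta⟩
  let c (t : α) : ℕ := Nat.find (hAcov t)
  -- Truncating at `c t` keeps the codes finite. For `s < t`, below `c t` we have `J s ⊆ J t`,
  -- and `c t ∈ J t \ J s` because `A (c t)` is an antichain through `t`.
  let J (t : α) : Finset ℕ := {n ∈ Finset.range (c t + 1) | ∃ s ≤ t, s ∈ A n}
  let code (X : Finset ℕ) : Lex (ℕ → Bool) := toLex fun n => decide (n ∈ X)
  refine exists_strictMono_rat_of_countable_range (g := code ∘ J) (fun s t hst => ?_)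
    ((countable_range code).mono (range_comp_subset_range J code))
  refine Pi.toLex_lt_of_le_of_lt (i := c t) (fun j hj => ?_) ?_
  · simp only [J, Finset.mem_filter, Finset.mem_range, Bool.le_iff_imp, decide_eq_true_eq]
    exact fun ⟨_, u, hus, hu⟩ => ⟨by omega, u, hus.trans hst.le, hu⟩
  · have hs : ¬∃ u ≤ s, u ∈ A (c t) := fun ⟨u, hus, hu⟩ =>
      hAanti (c t) hu (Nat.find_spec (hAcov t)) (lt_of_le_of_lt hus hst).ne (hus.trans hst.le)
    have ht : ∃ u ≤ t, u ∈ A (c t) := ⟨t, le_rfl, Nat.find_spec (hAcov t)⟩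
    simp [J, hs, ht]

namespace TreeOrder

variable {T : Type u} [TreeOrder T]

instance : WellFoundedLT T where
  wf := ⟨fun t => (Set.WellFoundedOn.acc_iff_wellFoundedOn.out 0 2).2 <| by
    rw [Relation.transGen_eq_self]
    exact TreeOrder.isWF_lt t⟩

lemma isChain_Iic (t : T) : IsChain (· ≤ ·) (Iic t) := by
  rw [← Iio_insert]
  exact (TreeOrder.chain_lt t).insert fun b hb _ => Or.inr (le_of_lt hb)

lemma le_total_of_le {x y z : T} (hx : x ≤ z) (hy : y ≤ z) : x ≤ y ∨ y ≤ x :=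
  (isChain_Iic z).total hx hy

lemma Iic_diff_Iic {t u : T} (h : t ≤ u) : Iic u \ Iic t = Ioc t u := by
  ext x
  refine ⟨fun ⟨hxu, hxt⟩ => ⟨?_, hxu⟩, fun ⟨htx, hxu⟩ => ⟨hxu, htx.not_ge⟩⟩
  exact lt_of_le_not_ge ((le_total_of_le h hxu).resolve_right hxt) hxt

lemma le_of_covBy_of_lt_of_le {t x u v : T} (hx : t ⋖ x) (hxu : x ≤ u) (hv : t < v)
    (hvu : v ≤ u) : x ≤ v :=
  (le_total_of_le hxu hvu).elim id fun hvx =>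
    (eq_or_lt_of_le hvx).elim ge_of_eq fun h => (hx.2 hv h).elim

lemma disjoint_Ioc_of_covBy {t x y u v : T} (hx : t ⋖ x) (hy : t ⋖ y) (hxy : x ≠ y)
    (hxu : x ≤ u) (hyv : y ≤ v) : Disjoint (Ioc t u) (Ioc t v) := by
  refine Set.disjoint_left.2 fun w ⟨htw, hwu⟩ ⟨_, hwv⟩ => hxy ?_
  have hxw := le_of_covBy_of_lt_of_le hx hxu htw hwu
  have hyw := le_of_covBy_of_lt_of_le hy hyv htw hwv
  rcases le_total_of_le hxw hyw with h | h
  · exact le_antisymm h (le_of_covBy_of_lt_of_le hy le_rfl hx.lt h)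
  · exact le_antisymm (le_of_covBy_of_lt_of_le hx le_rfl hy.lt h) h

lemma isOpen_Ioc (a b : T) : IsOpen (Ioc a b) :=
  .basic _ (Or.inl ⟨a, b, rfl⟩)

lemma isOpen_Iic (b : T) : IsOpen (Iic b) :=
  .basic _ (Or.inr ⟨b, rfl⟩)

lemma isClosed_Iic (b : T) : IsClosed (Iic b) := by
  refine ⟨isOpen_iff_forall_mem_open.2 fun x hx =>
    ⟨Ioc (x ⊓ b) x, ?_, isOpen_Ioc _ _, ?_, le_rfl⟩⟩
  · exact fun y ⟨hy, hyx⟩ hyb => hy.not_ge (le_inf hyx hyb)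
  · exact inf_le_left.lt_of_ne fun h => hx (h ▸ inf_le_right)

lemma exists_Ioc_subset_or_Iic_subset {x : T} {U : Set T} (hU : IsOpen U) (hx : x ∈ U) :
    (∃ a < x, Ioc a x ⊆ U) ∨ Iic x ⊆ U := by
  induction hU with
  | basic s hs =>
    rcases hs with ⟨a, b, rfl⟩ | ⟨b, rfl⟩
    · exact .inl ⟨a, hx.1, Ioc_subset_Ioc_right hx.2⟩
    · exact .inr (Iic_subset_Iic.2 hx)
  | univ => exact .inr (subset_univ _)
  | inter s t _ _ ihs iht =>
    rcases ihs hx.1, iht hx.2 with ⟨⟨a, hax, has⟩ | hs, ⟨b, hbx, hbt⟩ | ht⟩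
    · rcases le_total_of_le hax.le hbx.le with hab | hba
      · exact .inl ⟨b, hbx, subset_inter ((Ioc_subset_Ioc_left hab).trans has) hbt⟩
      · exact .inl ⟨a, hax, subset_inter has ((Ioc_subset_Ioc_left hba).trans hbt)⟩
    · exact .inl ⟨a, hax, subset_inter has (Ioc_subset_Iic_self.trans ht)⟩
    · exact .inl ⟨b, hbx, subset_inter (Ioc_subset_Iic_self.trans hs) hbt⟩
    · exact .inr (subset_inter hs ht)
  | sUnion S _ ih =>
    obtain ⟨s, hsS, hxs⟩ := hx
    exact (ih s hsS hxs).imp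
      (fun ⟨a, hax, has⟩ => ⟨a, hax, has.trans (subset_sUnion_of_mem hsS)⟩)
      fun hs => hs.trans (subset_sUnion_of_mem hsS)

lemma isCompact_Iic (t : T) : IsCompact (Iic t) := by
  induction t using WellFoundedLT.induction with
  | _ t ih =>
  classical
  refine isCompact_of_finite_subcover fun U hU hcov => ?_
  obtain ⟨i, hi⟩ := mem_iUnion.1 (hcov (le_refl t))
  rcases exists_Ioc_subset_or_Iic_subset (hU i) hi with ⟨a, hat, ha⟩ | h
  · obtain ⟨s, hs⟩ :=
      (ih a hat).elim_finite_subcover U hU ((Iic_subset_Iic.2 hat.le).trans hcov)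
    refine ⟨insert i s, fun y hy => ?_⟩
    rw [Finset.set_biUnion_insert]
    by_cases hya : y ≤ a
    · exact .inr (hs hya)
    · exact .inl (ha (Iic_diff_Iic hat.le ▸ ⟨hy, hya⟩))
  · exact ⟨{i}, by simpa using h⟩

noncomputable def indicatorIic (t : T) : ZeroAtInftyContinuousMap T ℝ where
  toFun := (Iic t).indicator 1
  continuous_toFun := continuous_indicator
    (by simp [(IsClopen.frontier_eq ⟨isClosed_Iic t, isOpen_Iic t⟩)]) continuousOn_const
  zero_at_infty' := HasCompactSupport.is_zero_at_infty <|
    .intro' (isCompact_Iic t) (isClosed_Iic t) fun _ hx => indicator_of_notMem hx 1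

lemma coe_indicatorIic (t : T) : ⇑(indicatorIic t) = (Iic t).indicator 1 := rfl

lemma norm_indicatorIic_le (t : T) : ‖indicatorIic t‖ ≤ 1 :=
  (ZeroAtInftyContinuousMap.norm_le zero_le_one).2 fun x => by
    by_cases hx : x ≤ t <;> simp [coe_indicatorIic, hx]

lemma one_le_dist_indicatorIic {s t : T} (h : s ≠ t) :
    1 ≤ dist (indicatorIic s) (indicatorIic t) := by
  wlog hst : ¬s ≤ t generalizing s t
  · rw [dist_comm]
    exact this h.symm fun hts => h (le_antisymm (not_not.1 hst) hts)
  calc (1 : ℝ) = dist (indicatorIic s s : ℝ) (indicatorIic t s) := by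
        simp [coe_indicatorIic, hst]
    _ ≤ _ := ZeroAtInftyContinuousMap.dist_apply_le _ _ s

lemma coe_indicatorIic_sub {t u : T} (h : t ≤ u) :
    ⇑(indicatorIic u - indicatorIic t) = (Ioc t u).indicator 1 := by
  rw [ZeroAtInftyContinuousMap.coe_sub, coe_indicatorIic, coe_indicatorIic, ← Iic_diff_Iic h,
    indicator_sdiff (Iic_subset_Iic.2 h)]

lemma norm_sum_smul_indicatorIic_sub_le {ι : Type*} {t : T} {u : ι → T} {K : Finset ι}
    (htu : ∀ k, t ≤ u k) (hK : (K : Set ι).PairwiseDisjoint fun k => Ioc t (u k)) {c : ι → ℝ}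
    (hc : ∀ k, |c k| ≤ 1) : ‖∑ k ∈ K, c k • (indicatorIic (u k) - indicatorIic t)‖ ≤ 1 :=
  (ZeroAtInftyContinuousMap.norm_le zero_le_one).2 fun x => by
    simpa [ZeroAtInftyContinuousMap.coe_sum, coe_indicatorIic_sub (htu _)] using
      abs_sum_mul_indicator_le_one hK hc x

lemma tendsto_indicatorIic_of_covBy {t : T} {x u : ℕ → T} (hx : Function.Injective x)
    (htx : ∀ k, t ⋖ x k) (hxu : ∀ k, x k ≤ u k) :
    Tendsto (fun k => indicatorIic (u k)) atTop (@nhds _ (weakTop _) (indicatorIic t)) := by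
  have hdisj : Pairwise fun k j => Disjoint (Ioc t (u k)) (Ioc t (u j)) := fun k j hkj =>
    disjoint_Ioc_of_covBy (htx k) (htx j) (hx.ne hkj) (hxu k) (hxu j)
  refine tendsto_nhds_weakTop_iff.2 fun φ => ?_
  have hsum : Summable fun k => |φ (indicatorIic (u k) - indicatorIic t)| :=
    summable_of_sum_le (fun _ => abs_nonneg _) fun K => φ.sum_abs_le_opNorm K _ fun _ hc =>
      norm_sum_smul_indicatorIic_sub_le (fun k => (htx k).le.trans (hxu k))
        (hdisj.set_pairwise K) hc
  simpa [map_sub, tendsto_sub_nhds_zero_iff] using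
    (tendsto_zero_iff_abs_tendsto_zero _).2 hsum.tendsto_atTop_zero

lemma finite_covBy_of_isolated {W : Set T} {t : T} {V : Set (ZeroAtInftyContinuousMap T ℝ)}
    (hV : IsOpen[weakTop _] V) (htV : indicatorIic t ∈ V)
    (hWV : ∀ u ∈ W, t < u → indicatorIic u ∉ V) : {x | t ⋖ x ∧ ∃ u ∈ W, x ≤ u}.Finite := by
  by_contra hinf
  let x := Set.Infinite.natEmbedding _ hinf
  choose u huW hxu using fun k => (x k).2.2
  have hlim := tendsto_indicatorIic_of_covBy (fun k j h => x.injective (Subtype.ext h))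
    (fun k => (x k).2.1) hxu
  obtain ⟨k, hk⟩ := (hlim.eventually (@IsOpen.mem_nhds _ (weakTop _) _ _ hV htV)).exists
  exact hWV (u k) (huW k) ((x k).2.1.lt.trans_le (hxu k)) hk

lemma exists_finite_covBy_of_diam_lt_one {W : Set T} {V : Set (ZeroAtInftyContinuousMap T ℝ)}
    (hV : IsOpen[weakTop _] V) (hWV : (indicatorIic '' W ∩ V).Nonempty)
    (hdiam : Metric.diam (indicatorIic '' W ∩ V) < 1) :
    ∃ t ∈ W, {x | t ⋖ x ∧ ∃ u ∈ W, x ≤ u}.Finite := by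
  obtain ⟨_, ⟨t, htW, rfl⟩, htV⟩ := hWV
  have hbdd : Bornology.IsBounded (indicatorIic '' W ∩ V) :=
    (Metric.isBounded_closedBall (x := 0) (r := 1)).subset fun _ ⟨⟨s, _, hs⟩, _⟩ =>
      hs ▸ mem_closedBall_zero_iff.2 (norm_indicatorIic_le s)
  refine ⟨t, htW, finite_covBy_of_isolated hV htV fun u huW htu huV => ?_⟩
  have := Metric.dist_le_diam_of_mem hbdd ⟨mem_image_of_mem _ huW, huV⟩
    ⟨mem_image_of_mem _ htW, htV⟩
  linarith [one_le_dist_indicatorIic htu.ne']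

lemma exists_add_le_of_finite_covBy {f : T → ℝ} (hf : StrictMono f) {W : Set T} {t : T}
    (hfin : {x | t ⋖ x ∧ ∃ u ∈ W, x ≤ u}.Finite) :
    ∃ η > 0, ∀ u ∈ W, t < u → f t + η ≤ f u := by
  have hev : ∀ᶠ η in 𝓝[>] (0 : ℝ), ∀ x ∈ {x | t ⋖ x ∧ ∃ u ∈ W, x ≤ u}, f t + η ≤ f x :=
    (eventually_all_finite hfin).2 fun x hx => nhdsWithin_le_nhds <|
      (eventually_le_nhds (sub_pos.2 (hf hx.1.lt))).mono fun η hη => by linarith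
  obtain ⟨η, hη, hpos⟩ := (hev.and self_mem_nhdsWithin).exists
  refine ⟨η, hpos, fun u huW htu => ?_⟩
  obtain ⟨x, htx, hxu⟩ := exists_covBy_le_of_lt htu
  exact (hη x ⟨htx, u, huW, hxu⟩).trans (hf.monotone hxu)

section Rank

variable {D : Set T} {f : T → ℝ}

/-- A well-founded certificate that `t` is good in Haydon's sense relative to `D`. It lives in
`Type`, not `Prop`, so that its height can be measured; the least height is the rank of `t`. -/
inductive GoodDerivation (D : Set T) (f : T → ℝ) : T → Type u
  | mk (t : T) (η : ℝ) (hη : 0 < η)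
      (next : ∀ u ∈ D, t < u → f u < f t + η → GoodDerivation D f u) : GoodDerivation D f t

noncomputable def GoodDerivation.height : {t : T} → GoodDerivation D f t → Ordinal.{u}
  | t, .mk _ η _ next =>
    ⨆ u : {u // u ∈ D ∧ t < u ∧ f u < f t + η},
      Order.succ (next u.1 u.2.1 u.2.2.1 u.2.2.2).height

lemma GoodDerivation.height_next_lt {t u : T} {η : ℝ} {hη : 0 < η}
    {next : ∀ u ∈ D, t < u → f u < f t + η → GoodDerivation D f u}
    (hu : u ∈ D) (htu : t < u) (hfu : f u < f t + η) :
    (next u hu htu hfu).height < (GoodDerivation.mk t η hη next).height := by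
  rw [height]
  exact (Order.lt_succ _).trans_le (le_ciSup Ordinal.bddAbove_of_small
    (⟨u, hu, htu, hfu⟩ : {u // u ∈ D ∧ t < u ∧ f u < f t + η}))

noncomputable def goodRank (D : Set T) (f : T → ℝ) (t : T) : Ordinal.{u} :=
  ⨅ d : GoodDerivation D f t, d.height

lemma exists_goodRank_lt {t : T} (h : Nonempty (GoodDerivation D f t)) :
    ∃ η > 0, ∀ u ∈ D, t < u → f u < f t + η → goodRank D f u < goodRank D f t := by
  obtain ⟨d, hd⟩ := ciInf_mem fun d : GoodDerivation D f t => d.height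
  cases d with
  | mk _ η hη next =>
    exact ⟨η, hη, fun u hu htu hfu =>
      (ciInf_le' _ _).trans_lt ((GoodDerivation.height_next_lt hu htu hfu).trans_eq hd)⟩

lemma nonempty_goodDerivation
    (hgap : ∀ W ⊆ D, W.Nonempty → ∃ t ∈ W, ∃ η > 0, ∀ u ∈ W, t < u → f t + η ≤ f u)
    {t : T} (ht : t ∈ D) : Nonempty (GoodDerivation D f t) := by
  by_contra h₀
  obtain ⟨t, ⟨-, ht⟩, η, hη, hgapt⟩ :=
    hgap {t ∈ D | IsEmpty (GoodDerivation D f t)} (sep_subset _ _)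
      ⟨t, ht, not_nonempty_iff.1 h₀⟩
  exact ht.false (.mk t η hη fun u hu htu hfu => Classical.choice <|
    not_isEmpty_iff.1 fun hu' => (hgapt u ⟨hu, hu'⟩ htu).not_gt hfu)

lemma isSigmaAntichain_of_forall_exists_add_le
    (hgap : ∀ W ⊆ D, W.Nonempty → ∃ t ∈ W, ∃ η > 0, ∀ u ∈ W, t < u → f t + η ≤ f u) :
    IsSigmaAntichain D := by
  choose! η hη hrank using fun t (ht : t ∈ D) =>
    exists_goodRank_lt (nonempty_goodDerivation hgap ht)
  -- On each class `P p`, comparable points have `f`-values closer than `η`, so the rank drops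
  -- along chains.
  let P (p : ℕ × ℤ) : Set T := {t ∈ D | 1 / ((p.1 : ℝ) + 1) < η t ∧ ⌊f t * (p.1 + 1)⌋ = p.2}
  have hD : D ⊆ ⋃ p, P p := fun t ht =>
    let ⟨m, hm⟩ := exists_nat_one_div_lt (hη t ht)
    mem_iUnion.2 ⟨(m, ⌊f t * (m + 1)⌋), ht, hm, rfl⟩
  refine (IsSigmaAntichain.iUnion fun p =>
    isSigmaAntichain_of_forall_finite_lt fun t _ => ?_).mono hD
  refine IsChain.finite_of_strictAntiOn (ρ := goodRank D f)
    ((isChain_Iic t).mono fun x hx => hx.2.le) ?_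
  rintro a ⟨⟨haD, haη, ha⟩, -⟩ b ⟨⟨hbD, -, hb⟩, -⟩ hab
  refine hrank a haD b hbD hab ?_
  have hdiff := (abs_lt.1 (Int.abs_sub_lt_one_of_floor_eq_floor (hb.trans ha.symm))).2
  have hfab : f b - f a < 1 / ((p.1 : ℝ) + 1) := by
    rw [lt_div_iff₀ (by positivity)]
    linarith
  linarith

end Rank

end TreeOrder

/-- If `T` is an `ℝ`-embeddable tree such that `C₀(T)` is `σ`-fragmentable, then `T`
is `ℚ`-embeddable (special). -/
theorem special_of_sigmaFragmentable {T : Type u} [TreeOrder T]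
    (f : T → ℝ) (hf : StrictMono f)
    (h : SigmaFragmentable (ZeroAtInftyContinuousMap T ℝ)) :
    ∃ g : T → ℚ, StrictMono g := by
  obtain ⟨A, hAcov, hAfrag⟩ := h (1 / 2) one_half_pos
  have hcov : (univ : Set T) = ⋃ n, TreeOrder.indicatorIic ⁻¹' A n := by
    simp [← preimage_iUnion, hAcov]
  refine exists_strictMono_rat_of_isSigmaAntichain (hcov ▸ IsSigmaAntichain.iUnion fun n => ?_)
  refine TreeOrder.isSigmaAntichain_of_forall_exists_add_le (f := f) fun W hW hne => ?_
  obtain ⟨V, hV, hWV, hdiam⟩ := hAfrag n _ (image_subset_iff.2 hW) (hne.image _)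
  obtain ⟨t, htW, hfin⟩ := TreeOrder.exists_finite_covBy_of_diam_lt_one hV hWV (by linarith)
  exact ⟨t, htW, TreeOrder.exists_add_le_of_finite_covBy hf hfin⟩
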